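/- The action of the braid-cyclic operations on trees with N labeled edges is transitive: for any two trees T and T' with N labeled edges there is a finite composition of the operations U_1^{±1}, …, U_{N−1}^{±1}, Λ^{±1} taking (the isomorphism class of) T to (the isomorphism class of) T'. -/

import Mathlib

open scoped Classical

/-! Trees with `N` labeled edges.

A tree with `N` labeled edges (on `N+1` vertices) is modeled as a map
`ℓ : ZMod N → Sym2 V` (for `V = Fin (N+1)`) assigning to each label an edge
(an unordered pair of vertices), which is injective, has no loop edges, and whose
edges form a tree.  Two such trees are identified when there is a label-preserving
graph isomorphism, i.e. a permutation of the vertices carrying one edge-labeling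
to the other. -/

/-- The operation `Λ` on trees with labeled edges: the underlying tree is unchanged
and all edge labels are shifted cyclically by one, `i ↦ (i+1) mod N`
(so the edge labeled `i` of the new tree is the edge labeled `i-1` of the old one). -/
def treeLam {N : ℕ} {V : Type*} (ℓ : ZMod N → Sym2 V) : ZMod N → Sym2 V :=
  fun i => ℓ (i - 1)

/-- The operation `U_k` on trees with labeled edges: if the edges labeled `k-1` and `k`
have no common vertex, the two labels are exchanged; if the edge labeled `k-1` joins
`A` and `B` and the edge labeled `k` joins `A` and `C`, then the edge `AB` receives
label `k`, the edge `AC` is deleted, and a new edge `BC` labeled `k-1` is added. -/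
noncomputable def treeU {N : ℕ} {V : Type*}
    (k : ZMod N) (ℓ : ZMod N → Sym2 V) : ZMod N → Sym2 V :=
  if h : ∃ a, a ∈ ℓ (k - 1) ∧ a ∈ ℓ k then
    -- the common vertex is `A := h.choose`; `B`, `C` are the other endpoints
    fun i =>
      if i = k - 1 then
        Sym2.mk (Sym2.Mem.other h.choose_spec.1) (Sym2.Mem.other h.choose_spec.2)
      else if i = k then ℓ (k - 1)
      else ℓ i
  else
    fun i =>
      if i = k - 1 then ℓ k
      else if i = k then ℓ (k - 1)
      else ℓ i

/-- Two edge-labelings are equivalent iff some label-preserving graph isomorphism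
(a permutation of the vertices) carries one to the other. -/
def treeEquiv {N : ℕ} {V : Type*} (ℓ ℓ' : ZMod N → Sym2 V) : Prop :=
  ∃ σ : Equiv.Perm V, ∀ i, ℓ' i = Sym2.map σ (ℓ i)

/-- `ℓ` is a tree with `N` labeled edges: the `N` assigned edges are distinct non-loops
and form a (connected, acyclic) tree on the `N+1` vertices. -/
def IsLTree {N : ℕ} (ℓ : ZMod N → Sym2 (Fin (N + 1))) : Prop :=
  Function.Injective ℓ ∧ (∀ i, ¬ (ℓ i).IsDiag) ∧
    (SimpleGraph.fromEdgeSet (Set.range ℓ)).IsTree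

/-- One move on trees with labeled edges: apply `Λ` or some `U_k` (`1 ≤ k ≤ N-1`) and
pass to any isomorphic labeled tree. -/
def treeStep (N : ℕ) (a b : ZMod N → Sym2 (Fin (N + 1))) : Prop :=
  treeEquiv (treeLam a) b ∨
    ∃ k : ℕ, 1 ≤ k ∧ k ≤ N - 1 ∧ treeEquiv (treeU (k : ZMod N) a) b

/-! Fix a vertex `A`. If some edge avoids `A`, connectedness yields a path `A – B – C` with
`C ≠ A`; a power of `Λ` gives `AB` the label `0`; let `d` be the label of `BC`. For `d ≥ 2`,
either the edge labelled `d - 1` already has the form `BE`, or `U_d` swaps the labels `d - 1`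
and `d`, or `U_d` slides `BC` along the edge labelled `d - 1`; in each case we get an edge `BE`,
`E ≠ A`, labelled `d - 1`, without changing the number of edges at `A`. At `d = 1`, `U_1` slides
`BC` over `AB` onto `A`. So every tree is connected to the star centred at `A`, and any two
labelled stars with `N` edges are isomorphic. -/

open Finset SimpleGraph Function

def treeMove (N : ℕ) (x y : ZMod N → Sym2 (Fin (N + 1))) : Prop :=
  treeStep N x y ∨ treeStep N y x ∨ treeEquiv x y

notation:50 x " ⇝ " y => Relation.ReflTransGen (treeMove _) x y

section Operations

variable {N : ℕ} {V : Type*}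

theorem treeEquiv_refl (ℓ : ZMod N → Sym2 V) : treeEquiv ℓ ℓ :=
  ⟨Equiv.refl V, fun i => by simp⟩

theorem treeEquiv.symm {ℓ ℓ' : ZMod N → Sym2 V} (h : treeEquiv ℓ ℓ') :
    treeEquiv ℓ' ℓ := by
  obtain ⟨σ, hσ⟩ := h
  exact ⟨σ.symm, fun i => by simp [hσ i, Sym2.map_map]⟩

theorem treeLam_iterate (ℓ : ZMod N → Sym2 V) (n : ℕ) :
    treeLam^[n] ℓ = ℓ ∘ Equiv.subRight (n : ZMod N) := by
  induction n with
  | zero => funext i; simp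
  | succ n ih =>
    rw [iterate_succ_apply', ih]
    funext i
    simp only [treeLam, comp_apply, Equiv.subRight_apply, Nat.cast_succ]
    ring_nf

theorem treeU_of_disjoint {k : ZMod N} {ℓ : ZMod N → Sym2 V}
    (h : ¬ ∃ a, a ∈ ℓ (k - 1) ∧ a ∈ ℓ k) :
    treeU k ℓ = ℓ ∘ Equiv.swap (k - 1) k := by
  ext i
  simp only [treeU, dif_neg h, comp_apply, Equiv.swap_apply_def]
  split_ifs <;> simp_all

theorem Sym2.other_eq_of_eq_mk {a c : V} {z : Sym2 V} (h : a ∈ z) (hz : z = s(a, c)) :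
    Sym2.Mem.other h = c :=
  Sym2.congr_right.1 ((Sym2.other_spec h).trans hz)

theorem treeU_of_common_vertex {k : ZMod N} {ℓ : ZMod N → Sym2 V} {x y z : V}
    (h₁ : ℓ (k - 1) = s(x, z)) (h₂ : ℓ k = s(x, y)) (hyz : y ≠ z) :
    treeU k ℓ = update (update ℓ k s(x, z)) (k - 1) s(z, y) := by
  have hex : ∃ a, a ∈ ℓ (k - 1) ∧ a ∈ ℓ k := ⟨x, by simp [h₁], by simp [h₂]⟩
  have hx : hex.choose = x := by
    obtain ⟨h1, h2⟩ := hex.choose_spec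
    generalize hex.choose = c at h1 h2
    rw [h₁, Sym2.mem_iff] at h1
    rw [h₂, Sym2.mem_iff] at h2
    grind
  have hz : Sym2.Mem.other hex.choose_spec.1 = z := Sym2.other_eq_of_eq_mk _ (by rw [hx, h₁])
  have hy : Sym2.Mem.other hex.choose_spec.2 = y := Sym2.other_eq_of_eq_mk _ (by rw [hx, h₂])
  ext1 i
  simp only [treeU, dif_pos hex, hz, hy, update_apply]
  split_ifs <;> simp_all

end Operations

section LabelDegree

variable {ι V : Type*} [Fintype ι] {ℓ ℓ' : ι → Sym2 V} {A : V}

noncomputable def labelDegree (ℓ : ι → Sym2 V) (A : V) : ℕ :=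
  #{t | A ∈ ℓ t}

theorem labelDegree_comp_equiv (e : ι ≃ ι) : labelDegree (ℓ ∘ e) A = labelDegree ℓ A :=
  card_equiv e (by simp)

theorem labelDegree_congr (h : ∀ t, A ∈ ℓ' t ↔ A ∈ ℓ t) :
    labelDegree ℓ' A = labelDegree ℓ A := by
  simp only [labelDegree, h]

theorem labelDegree_eq_succ {k : ι} (h : ∀ t, A ∈ ℓ' t ↔ A ∈ ℓ t ∨ t = k)
    (hk : A ∉ ℓ k) :
    labelDegree ℓ' A = labelDegree ℓ A + 1 := by
  have : ({t | A ∈ ℓ' t} : Finset ι) = insert k ({t | A ∈ ℓ t} : Finset ι) := by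
    ext t
    simp [h, or_comm]
  rw [labelDegree, this, card_insert_of_notMem (by simpa using hk), labelDegree]

theorem labelDegree_le_card : labelDegree ℓ A ≤ Fintype.card ι :=
  card_filter_le _ _

theorem labelDegree_eq_card_iff : labelDegree ℓ A = Fintype.card ι ↔ ∀ t, A ∈ ℓ t := by
  simp [labelDegree, ← card_univ, card_filter_eq_iff]

end LabelDegree

namespace SimpleGraph

variable {V : Type*} {G G' : SimpleGraph V}

theorem Connected.of_adj_reachable (hG : G.Connected)
    (h : ∀ u v, G.Adj u v → G'.Reachable u v) : G'.Connected := by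
  have := hG.nonempty
  refine Connected.mk fun u v => ?_
  have hle : G.Adj ≤ Relation.ReflTransGen G'.Adj := by
    rw [← reachable_eq_reflTransGen]; exact h
  have huv := hG.preconnected u v
  rw [reachable_eq_reflTransGen] at huv ⊢
  exact Relation.reflTransGen_closed hle _ _ huv

theorem IsAcyclic.not_adj_of_adj_of_adj (hG : G.IsAcyclic) {a b c : V} (hab : G.Adj a b)
    (hac : G.Adj a c) : ¬ G.Adj b c := fun hbc =>
  hG.cliqueFree le_rfl _ (is3Clique_triple_iff.2 ⟨hab, hac, hbc⟩)

theorem Connected.exists_adj_adj_ne (hG : G.Connected) {A P Q : V} (hPQ : G.Adj P Q)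
    (hP : P ≠ A) (hQ : Q ≠ A) : ∃ B C, G.Adj A B ∧ G.Adj B C ∧ C ≠ A := by
  by_contra! h
  have star : ∀ v, G.Reachable A v → v = A ∨ G.Adj A v := by
    intro v hv
    rw [reachable_eq_reflTransGen] at hv
    induction hv with
    | refl => exact .inl rfl
    | tail _ hbc ih =>
      rcases ih with rfl | hAb
      · exact .inr hbc
      · exact .inl (h _ _ hAb hbc)
  rcases star P (hG.preconnected A P) with hPA | hAP
  · exact hP hPA
  · exact hQ (h P Q hAP hPQ)

end SimpleGraph

section IsLTree

variable {N : ℕ} {ℓ : ZMod N → Sym2 (Fin (N + 1))}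

theorem IsLTree.comp_equiv (hℓ : IsLTree ℓ) (e : Equiv.Perm (ZMod N)) :
    IsLTree (ℓ ∘ e) := by
  obtain ⟨hinj, hnd, htree⟩ := hℓ
  refine ⟨hinj.comp e.injective, fun i => hnd _, ?_⟩
  rwa [Set.range_comp, Equiv.range_eq_univ, Set.image_univ]

theorem IsLTree.ne_of_eq_mk (hℓ : IsLTree ℓ) {t : ZMod N} {u v : Fin (N + 1)}
    (h : ℓ t = s(u, v)) : u ≠ v := fun huv => hℓ.2.1 t (by simp [h, huv])

theorem IsLTree.adj (hℓ : IsLTree ℓ) {t : ZMod N} {u v : Fin (N + 1)} (h : ℓ t = s(u, v)) :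
    (fromEdgeSet (Set.range ℓ)).Adj u v :=
  (fromEdgeSet_adj _).2 ⟨⟨t, h⟩, hℓ.ne_of_eq_mk h⟩

theorem isLTree_of_connected [NeZero N] (hnd : ∀ i, ¬ (ℓ i).IsDiag)
    (hc : (fromEdgeSet (Set.range ℓ)).Connected) : IsLTree ℓ := by
  have hE : (fromEdgeSet (Set.range ℓ)).edgeSet = Set.range ℓ := by
    rw [edgeSet_fromEdgeSet, sdiff_eq_left, Set.disjoint_left]
    rintro _ ⟨t, rfl⟩
    exact hnd t
  have hcard : N ≤ Nat.card (Set.range ℓ) := by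
    simpa [hE] using hc.card_vert_le_card_edgeSet_add_one
  have hbij : Bijective (Set.rangeFactorization ℓ) :=
    Set.rangeFactorization_surjective.bijective_of_nat_card_le (by simpa using hcard)
  have hinj : Injective ℓ := fun a b hab => hbij.1 (Subtype.ext hab)
  refine ⟨hinj, hnd, isTree_iff_connected_and_card.2 ⟨hc, ?_⟩⟩
  rw [hE, Nat.card_range_of_injective hinj]
  simp

theorem IsLTree.slide [NeZero N] (hℓ : IsLTree ℓ) {k : ZMod N} {x y z : Fin (N + 1)}
    (h₁ : ℓ (k - 1) = s(x, z)) (h₂ : ℓ k = s(x, y)) (hyz : y ≠ z) :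
    IsLTree (update (update ℓ k s(x, z)) (k - 1) s(z, y)) := by
  set ℓ' := update (update ℓ k s(x, z)) (k - 1) s(z, y)
  have hxz : x ≠ z := hℓ.ne_of_eq_mk h₁
  have hk : k - 1 ≠ k := fun h => hyz (Sym2.congr_right.1 (by rw [← h₁, ← h₂, h]))
  have hℓ'k : ℓ' k = s(x, z) := by simp [ℓ', hk.symm]
  have hℓ'k1 : ℓ' (k - 1) = s(z, y) := by simp [ℓ']
  have hℓ't : ∀ t, t ≠ k - 1 → t ≠ k → ℓ' t = ℓ t := fun t h1 h2 => by
    simp [ℓ', h1, h2]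
  have hnd : ∀ t, ¬ (ℓ' t).IsDiag := by
    intro t
    by_cases h1 : t = k - 1
    · simpa [h1, hℓ'k1] using hyz.symm
    by_cases h2 : t = k
    · simpa [h2, hℓ'k] using hxz
    · rw [hℓ't t h1 h2]; exact hℓ.2.1 t
  have adj' : ∀ {t u v}, ℓ' t = s(u, v) → (fromEdgeSet (Set.range ℓ')).Reachable u v :=
    fun {t u v} h => (((fromEdgeSet_adj _).2 ⟨⟨t, h⟩, fun huv => hnd t (by simp [h, huv])⟩ :
      (fromEdgeSet (Set.range ℓ')).Adj u v)).reachable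
  refine isLTree_of_connected hnd (hℓ.2.2.connected.of_adj_reachable fun u v huv => ?_)
  obtain ⟨⟨t, ht⟩, -⟩ := (fromEdgeSet_adj _).1 huv
  by_cases h1 : t = k - 1
  · exact adj' (hℓ'k.trans (h₁.symm.trans (h1 ▸ ht)))
  by_cases h2 : t = k
  · have hxy : (fromEdgeSet (Set.range ℓ')).Reachable x y := (adj' hℓ'k).trans (adj' hℓ'k1)
    rcases Sym2.eq_iff.1 (ht.symm.trans (h2 ▸ h₂)) with ⟨rfl, rfl⟩ | ⟨rfl, rfl⟩
    exacts [hxy, hxy.symm]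
  · exact adj' ((hℓ't t h1 h2).trans ht)

end IsLTree

section Moves

variable {N : ℕ}

instance : Std.Symm (treeMove N) where
  symm _ _ h := by
    rcases h with h | h | h
    exacts [.inr (.inl h), .inl h, .inr (.inr h.symm)]

theorem reach_of_treeEquiv {x y : ZMod N → Sym2 (Fin (N + 1))} (h : treeEquiv x y) : x ⇝ y :=
  .single (.inr (.inr h))

theorem reach_comp_subRight [NeZero N] (ℓ : ZMod N → Sym2 (Fin (N + 1))) (c : ZMod N) :
    ℓ ⇝ ℓ ∘ Equiv.subRight c := by
  rw [← ZMod.natCast_zmod_val c, ← treeLam_iterate]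
  induction c.val with
  | zero => exact .refl
  | succ n ih =>
    rw [iterate_succ_apply']
    exact ih.tail (.inl (.inl (treeEquiv_refl _)))

theorem reach_treeU [NeZero N] {k : ZMod N} (hk : k ≠ 0) (ℓ : ZMod N → Sym2 (Fin (N + 1))) :
    ℓ ⇝ treeU k ℓ := by
  have hpos : k.val ≠ 0 := (ZMod.val_ne_zero k).2 hk
  have hlt : k.val < N := ZMod.val_lt k
  refine .single (.inl (.inr ⟨k.val, by omega, by omega, ?_⟩))
  rw [ZMod.natCast_zmod_val]
  exact treeEquiv_refl _

end Moves

section Degree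

variable {N : ℕ} [NeZero N] {ℓ : ZMod N → Sym2 (Fin (N + 1))} {A B C : Fin (N + 1)}

theorem exists_reach_labelDegree_succ_of_one (hℓ : IsLTree ℓ) (h1 : (1 : ZMod N) ≠ 0)
    (h₀ : ℓ 0 = s(A, B)) (h₁ : ℓ 1 = s(B, C)) (hAC : A ≠ C) :
    ∃ ℓ', (ℓ ⇝ ℓ') ∧ IsLTree ℓ' ∧ labelDegree ℓ' A = labelDegree ℓ A + 1 := by
  have hAB : A ≠ B := hℓ.ne_of_eq_mk h₀
  have h₀' : ℓ (1 - 1) = s(B, A) := by rw [sub_self, h₀, Sym2.eq_swap]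
  have hslide := treeU_of_common_vertex h₀' h₁ hAC.symm
  refine ⟨_, reach_treeU h1 ℓ, hslide ▸ hℓ.slide h₀' h₁ hAC.symm, ?_⟩
  rw [hslide, sub_self]
  refine labelDegree_eq_succ (k := 1) (fun t => ?_) (by simp [h₁, hAB, hAC])
  rcases eq_or_ne t 0 with rfl | h0
  · simp [h₀]
  rcases eq_or_ne t 1 with rfl | h1'
  · simp [h1]
  · simp [h0, h1']

theorem exists_reach_pred_label_of_slide {j : ZMod N} (hℓ : IsLTree ℓ) (hj : j ≠ 0)
    (hj1 : j - 1 ≠ 0) (h₀ : ℓ 0 = s(A, B)) (hBC : ℓ j = s(B, C)) (hAC : A ≠ C)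
    {D : Fin (N + 1)} (hCD : ℓ (j - 1) = s(C, D)) (hBD : B ≠ D) :
    ∃ ℓ', (ℓ ⇝ ℓ') ∧ IsLTree ℓ' ∧ labelDegree ℓ' A = labelDegree ℓ A ∧
      ℓ' 0 = s(A, B) ∧ ℓ' (j - 1) = s(B, D) ∧ A ≠ D := by
  have hAB : A ≠ B := hℓ.ne_of_eq_mk h₀
  have hCB : ℓ j = s(C, B) := by rw [hBC, Sym2.eq_swap]
  have hAD : A ≠ D := by
    rintro rfl
    exact hℓ.2.2.isAcyclic.not_adj_of_adj_of_adj (hℓ.adj (h₀.trans Sym2.eq_swap))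
      (hℓ.adj hBC) (hℓ.adj (hCD.trans Sym2.eq_swap))
  have hslide := treeU_of_common_vertex hCD hCB hBD
  refine ⟨_, reach_treeU hj ℓ, hslide ▸ hℓ.slide hCD hCB hBD, ?_, ?_, ?_, hAD⟩
  · rw [hslide]
    refine labelDegree_congr fun t => ?_
    rcases eq_or_ne t (j - 1) with rfl | h1
    · simp [hCD, hAB, hAC, hAD]
    rcases eq_or_ne t j with rfl | h2
    · simp [h1, hBC, hAB, hAC, hAD]
    · simp [h1, h2]
  · simp [hslide, hj1.symm, hj.symm, h₀]
  · simp [hslide, Sym2.eq_swap]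

theorem exists_reach_pred_label {j : ZMod N} (hℓ : IsLTree ℓ) (hj : j ≠ 0) (hj1 : j - 1 ≠ 0)
    (h₀ : ℓ 0 = s(A, B)) (hBC : ℓ j = s(B, C)) (hAC : A ≠ C) :
    ∃ ℓ' E, (ℓ ⇝ ℓ') ∧ IsLTree ℓ' ∧ labelDegree ℓ' A = labelDegree ℓ A ∧
      ℓ' 0 = s(A, B) ∧ ℓ' (j - 1) = s(B, E) ∧ A ≠ E := by
  by_cases hB : B ∈ ℓ (j - 1)
  · have hBE : ℓ (j - 1) = s(B, Sym2.Mem.other hB) := (Sym2.other_spec hB).symm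
    refine ⟨ℓ, _, .refl, hℓ, rfl, h₀, hBE, fun hAE => hj1 (hℓ.1 ?_)⟩
    rw [hBE, h₀, ← hAE, Sym2.eq_swap]
  by_cases hC : C ∈ ℓ (j - 1)
  · have hCD : ℓ (j - 1) = s(C, Sym2.Mem.other hC) := (Sym2.other_spec hC).symm
    have hBD : B ≠ Sym2.Mem.other hC := fun h => hB (h ▸ Sym2.other_mem hC)
    obtain ⟨ℓ', hℓ'⟩ := exists_reach_pred_label_of_slide hℓ hj hj1 h₀ hBC hAC hCD hBD
    exact ⟨ℓ', _, hℓ'⟩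
  · have hdisj : ¬ ∃ a, a ∈ ℓ (j - 1) ∧ a ∈ ℓ j := by
      rintro ⟨a, ha, haj⟩
      rw [hBC, Sym2.mem_iff] at haj
      rcases haj with rfl | rfl <;> contradiction
    have h0 : Equiv.swap (j - 1) j 0 = 0 := Equiv.swap_apply_of_ne_of_ne hj1.symm hj.symm
    refine ⟨_, C, reach_treeU hj ℓ, ?_, ?_, ?_, ?_, hAC⟩ <;> rw [treeU_of_disjoint hdisj]
    · exact hℓ.comp_equiv _
    · exact labelDegree_comp_equiv _
    · simp [h0, h₀]
    · simp [hBC]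

theorem exists_reach_labelDegree_succ_of_natCast {d : ℕ} (hd : 1 ≤ d) (hdN : d < N)
    (hℓ : IsLTree ℓ) (h₀ : ℓ 0 = s(A, B)) (hBC : ℓ d = s(B, C)) (hAC : A ≠ C) :
    ∃ ℓ', (ℓ ⇝ ℓ') ∧ IsLTree ℓ' ∧ labelDegree ℓ' A = labelDegree ℓ A + 1 := by
  have cast_ne : ∀ m : ℕ, 0 < m → m < N → (m : ZMod N) ≠ 0 := fun m h1 h2 => by
    rw [Ne, ZMod.natCast_eq_zero_iff]
    exact Nat.not_dvd_of_pos_of_lt h1 h2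
  induction d, hd using Nat.le_induction generalizing ℓ B C with
  | base =>
    exact exists_reach_labelDegree_succ_of_one hℓ (by exact_mod_cast cast_ne 1 one_pos hdN) h₀
      (by exact_mod_cast hBC) hAC
  | succ d hd ih =>
    have hpred : ((d + 1 : ℕ) : ZMod N) - 1 = d := by push_cast; ring
    obtain ⟨ℓ', E, hreach, hℓ', hdeg, h₀', hBE, hAE⟩ :=
      exists_reach_pred_label hℓ (cast_ne _ (by omega) hdN)
        (hpred ▸ cast_ne d (by omega) (by omega)) h₀ hBC hAC
    obtain ⟨ℓ'', hreach', hℓ'', hdeg'⟩ := ih (by omega) hℓ' h₀' (hpred ▸ hBE) hAE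
    exact ⟨ℓ'', hreach.trans hreach', hℓ'', hdeg'.trans (by rw [hdeg])⟩

theorem exists_reach_labelDegree_succ (hℓ : IsLTree ℓ) (hA : labelDegree ℓ A < N) :
    ∃ ℓ', (ℓ ⇝ ℓ') ∧ IsLTree ℓ' ∧ labelDegree ℓ' A = labelDegree ℓ A + 1 := by
  obtain ⟨t, ht⟩ : ∃ t, A ∉ ℓ t := by
    by_contra! h
    have := labelDegree_eq_card_iff.2 h
    rw [ZMod.card] at this
    omega
  obtain ⟨P, Q, hPQ⟩ : ∃ P Q, ℓ t = s(P, Q) := Sym2.exists.1 ⟨_, rfl⟩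
  obtain ⟨B, C, hAB, hBC, hCA⟩ := hℓ.2.2.connected.exists_adj_adj_ne (A := A) (hℓ.adj hPQ)
    (by rintro rfl; simp [hPQ] at ht) (by rintro rfl; simp [hPQ] at ht)
  obtain ⟨⟨i, hi⟩, -⟩ := (fromEdgeSet_adj _).1 hAB
  obtain ⟨⟨j, hj⟩, -⟩ := (fromEdgeSet_adj _).1 hBC
  have hij : j - i ≠ 0 := by
    rw [sub_ne_zero]
    rintro rfl
    rcases Sym2.eq_iff.1 (hi.symm.trans hj) with ⟨-, rfl⟩ | ⟨rfl, -⟩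
    exacts [hBC.ne rfl, hCA rfl]
  have hlt := ZMod.val_lt (j - i)
  obtain ⟨ℓ', hreach, hℓ', hdeg⟩ :=
    exists_reach_labelDegree_succ_of_natCast (ℓ := ℓ ∘ Equiv.subRight (-i))
    (d := (j - i).val) (by simpa [Nat.one_le_iff_ne_zero] using hij) hlt (hℓ.comp_equiv _)
    (by simpa using hi) (by simpa using hj) hCA.symm
  refine ⟨ℓ', (reach_comp_subRight ℓ _).trans hreach, hℓ', ?_⟩
  rw [hdeg, labelDegree_comp_equiv]

end Degree

theorem exists_reach_forall_mem {N : ℕ} [NeZero N] {ℓ : ZMod N → Sym2 (Fin (N + 1))}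
    (hℓ : IsLTree ℓ) (A : Fin (N + 1)) :
    ∃ ℓ', (ℓ ⇝ ℓ') ∧ IsLTree ℓ' ∧ ∀ t, A ∈ ℓ' t := by
  induction hn : N - labelDegree ℓ A generalizing ℓ with
  | zero =>
    have hle : labelDegree ℓ A ≤ Fintype.card (ZMod N) := labelDegree_le_card
    rw [ZMod.card] at hle
    refine ⟨ℓ, .refl, hℓ, labelDegree_eq_card_iff.1 ?_⟩
    rw [ZMod.card]
    omega
  | succ n ih =>
    obtain ⟨ℓ', hreach, hℓ', hdeg⟩ := exists_reach_labelDegree_succ hℓ (A := A) (by omega)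
    obtain ⟨ℓ'', hreach', hℓ''⟩ := ih hℓ' (by omega)
    exact ⟨ℓ'', hreach.trans hreach', hℓ''⟩

section StarEquiv

variable {N : ℕ} [NeZero N] {V : Type*} [Finite V] {A : V}

theorem exists_optionEquiv_of_forall_mem {ℓ : ZMod N → Sym2 V} (hinj : Injective ℓ)
    (hnd : ∀ t, ¬ (ℓ t).IsDiag) (hA : ∀ t, A ∈ ℓ t) (hV : Nat.card V = N + 1) :
    ∃ e : Option (ZMod N) ≃ V, e none = A ∧ ∀ t, ℓ t = s(A, e (some t)) := by
  let f : Option (ZMod N) → V := fun o => o.elim A fun t => Sym2.Mem.other (hA t)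
  have hf : ∀ t, ℓ t = s(A, f (some t)) := fun t => (Sym2.other_spec (hA t)).symm
  have hfA : ∀ t, f (some t) ≠ A := fun t => Sym2.other_ne (hnd t) (hA t)
  have hfinj : Injective f := by
    rintro (_ | t) (_ | t') h
    · rfl
    · exact absurd h.symm (hfA t')
    · exact absurd h (hfA t)
    · exact congrArg some (hinj ((hf t).trans (h ▸ (hf t').symm)))
  refine ⟨.ofBijective f (hfinj.bijective_of_nat_card_le ?_), rfl, hf⟩
  simp [hV]

theorem treeEquiv_of_forall_mem {ℓ ℓ' : ZMod N → Sym2 V} (hinj : Injective ℓ)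
    (hnd : ∀ t, ¬ (ℓ t).IsDiag) (hA : ∀ t, A ∈ ℓ t) (hinj' : Injective ℓ')
    (hnd' : ∀ t, ¬ (ℓ' t).IsDiag) (hA' : ∀ t, A ∈ ℓ' t) (hV : Nat.card V = N + 1) :
    treeEquiv ℓ ℓ' := by
  obtain ⟨e, he, hℓ⟩ := exists_optionEquiv_of_forall_mem hinj hnd hA hV
  obtain ⟨e', he', hℓ'⟩ := exists_optionEquiv_of_forall_mem hinj' hnd' hA' hV
  refine ⟨e.symm.trans e', fun t => ?_⟩
  have heA : e.symm A = none := by rw [← he, Equiv.symm_apply_apply]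
  simp [hℓ, hℓ', heA, he']

end StarEquiv

/-- the action of the braid-cyclic operations on trees with `N` labeled edges
is transitive: any two trees with `N` labeled edges are connected by a finite composition
of the operations `U_1^{±1}, …, U_{N-1}^{±1}, Λ^{±1}` (taking isomorphism classes to
isomorphism classes). -/
theorem stmt_5 (N : ℕ) (hN : 1 ≤ N) (a b : ZMod N → Sym2 (Fin (N + 1)))
    (ha : IsLTree a) (hb : IsLTree b) :
    Relation.ReflTransGen
      (fun x y => treeStep N x y ∨ treeStep N y x ∨ treeEquiv x y) a b := by
  have : NeZero N := ⟨by omega⟩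
  obtain ⟨a', ha', ⟨ha'inj, ha'nd, -⟩, ha'0⟩ := exists_reach_forall_mem ha 0
  obtain ⟨b', hb', ⟨hb'inj, hb'nd, -⟩, hb'0⟩ := exists_reach_forall_mem hb 0
  have hstar : treeEquiv a' b' :=
    treeEquiv_of_forall_mem ha'inj ha'nd ha'0 hb'inj hb'nd hb'0 (Nat.card_fin _)
  exact (ha'.trans (reach_of_treeEquiv hstar)).trans (symm hb')
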